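/- arXiv:1801.04079 — 4 statements merged into one kernel-verified Lean document; each statement's English description precedes it below -/
import Mathlib

section
/- Define the real bilinear form ω(u,v) = Re((conj u)ᵀ · (i·σ₃·v)) on ℂ². Let a, b ∈ ℂ with |a|² + |b|² = 1 and set T(u) = a·u + b·σ₂·conj(u). Then ω(T(u), T(v)) = ω(u, v) for all u, v ∈ ℂ². -/
open Complex

noncomputable section

/-- Componentwise complex conjugation on ℂ². -/
def conj2 (u : ℂ × ℂ) : ℂ × ℂ := ((starRingEnd ℂ) u.1, (starRingEnd ℂ) u.2)

/-- The action of the second Pauli matrix σ₂ = [[0,-i],[i,0]] on ℂ². -/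
def s2 (u : ℂ × ℂ) : ℂ × ℂ := (-I * u.2, I * u.1)

/-- The action of the third Pauli matrix σ₃ = [[1,0],[0,-1]] on ℂ². -/
def s3 (u : ℂ × ℂ) : ℂ × ℂ := (u.1, -u.2)

/-- The ℝ-linear map J(u) = σ₂ · conj(u). -/
def Jmap (u : ℂ × ℂ) : ℂ × ℂ := s2 (conj2 u)

/-- The pairing ⟨v, w⟩ = Re((conj v)ᵀ · w) on ℂ². -/
def pair (v w : ℂ × ℂ) : ℝ := ((starRingEnd ℂ) v.1 * w.1 + (starRingEnd ℂ) v.2 * w.2).re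

/-- The real bilinear form ω(u,v) = Re((conj u)ᵀ · (i·σ₃·v)). -/
def omegaForm (u v : ℂ × ℂ) : ℝ := pair u (I • s3 v)

/-!
`ω` is the real part of the sesquilinear form `h(u, v) = (conj u)ᵀ · (i σ₃ v)`. The antilinear
map `J` satisfies `h(Ju, Jv) = conj h(u, v)` and `h(Ju, v) = -conj h(u, Jv)`, so expanding
`h(Tu, Tv)` gives `|a|² h + |b|² conj h` plus a cross term of the form `z - conj z`, which is
purely imaginary. Taking real parts leaves `(|a|² + |b|²) ω(u, v)`.
-/

def hermForm : ℂ × ℂ →ₗ⋆[ℂ] ℂ × ℂ →ₗ[ℂ] ℂ :=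
  LinearMap.mk₂'ₛₗ (starRingEnd ℂ) (RingHom.id ℂ)
    (fun u v => starRingEnd ℂ u.1 * (I * v.1) + starRingEnd ℂ u.2 * (I * -v.2))
    (fun _ _ _ => by simp only [Prod.fst_add, Prod.snd_add, map_add]; ring)
    (fun _ _ _ => by simp only [Prod.smul_fst, Prod.smul_snd, smul_eq_mul, map_mul]; ring)
    (fun _ _ _ => by simp only [Prod.fst_add, Prod.snd_add]; ring)
    (fun _ _ _ => by simp only [Prod.smul_fst, Prod.smul_snd, smul_eq_mul, RingHom.id_apply]; ring)

theorem omegaForm_eq_re_hermForm (u v : ℂ × ℂ) : omegaForm u v = (hermForm u v).re := by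
  simp [omegaForm, pair, hermForm, s3]

theorem hermForm_Jmap_Jmap (u v : ℂ × ℂ) :
    hermForm (Jmap u) (Jmap v) = starRingEnd ℂ (hermForm u v) := by
  simp [hermForm, Jmap, s2, conj2]
  linear_combination I * (u.1 * starRingEnd ℂ v.1 - u.2 * starRingEnd ℂ v.2) * I_sq

theorem hermForm_Jmap_left (u v : ℂ × ℂ) :
    hermForm (Jmap u) v = -starRingEnd ℂ (hermForm u (Jmap v)) := by
  simp [hermForm, Jmap, s2, conj2]
  ring

theorem hermForm_add_smul_Jmap (a b : ℂ) (u v : ℂ × ℂ) :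
    hermForm (a • u + b • Jmap u) (a • v + b • Jmap v) =
      ‖a‖ ^ 2 * hermForm u v + ‖b‖ ^ 2 * starRingEnd ℂ (hermForm u v) +
        (starRingEnd ℂ a * b * hermForm u (Jmap v)
          - starRingEnd ℂ (starRingEnd ℂ a * b * hermForm u (Jmap v))) := by
  simp only [map_add, map_smulₛₗ, LinearMap.add_apply, LinearMap.smul_apply, smul_eq_mul,
    RingHom.id_apply]
  rw [hermForm_Jmap_Jmap, hermForm_Jmap_left, map_mul, map_mul, Complex.conj_conj,
    ← Complex.conj_mul', ← Complex.conj_mul']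
  ring

/-- If |a|²+|b|² = 1 and T(u) = a·u + b·σ₂·conj(u), then ω(T u, T v) = ω(u,v). -/
theorem stmt_4 (a b : ℂ) (hab : ‖a‖ ^ 2 + ‖b‖ ^ 2 = 1) :
    ∀ u v : ℂ × ℂ,
      omegaForm (a • u + b • Jmap u) (a • v + b • Jmap v) = omegaForm u v := by
  intro u v
  simp only [omegaForm_eq_re_hermForm, hermForm_add_smul_Jmap, Complex.add_re, Complex.sub_re,
    Complex.conj_re, sub_self, add_zero, ← Complex.ofReal_pow, Complex.re_ofReal_mul]
  linear_combination (hermForm u v).re * hab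
end
end

section
/- For u ∈ ℂ² define q₅(u) = Re((conj(σ₃σ₂·conj u))ᵀ · u), q₆(u) = Re((conj(i·σ₃σ₂·conj u))ᵀ · u), and q₇(u) = Re((conj(σ₃·u))ᵀ · u). Let b ∈ ℂ with |b| ≤ 1, write b_R = Re b, b_I = Im b, s = √(1-|b|²), and set u = s·ψ + b·σ₂·conj(ψ) for ψ ∈ ℂ². Then q₅(u) = (1 - 2b_R²)·q₅(ψ) - 2·b_I·b_R·q₆(ψ) - 2·s·b_R·q₇(ψ). -/
open Complex

noncomputable section

/-- q₅(u) = Re((conj(σ₃σ₂·conj u))ᵀ · u). -/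
def q5 (u : ℂ × ℂ) : ℝ := pair (s3 (s2 (conj2 u))) u

/-- q₆(u) = Re((conj(i·σ₃σ₂·conj u))ᵀ · u). -/
def q6 (u : ℂ × ℂ) : ℝ := pair (I • s3 (s2 (conj2 u))) u

/-- q₇(u) = Re((conj(σ₃·u))ᵀ · u). -/
def q7 (u : ℂ × ℂ) : ℝ := pair (s3 u) u

/-!
In coordinates, `q5 u = -2 Im (u₁u₂)`, `q6 u = 2 Re (u₁u₂)` and `q7 u = |u₁|² - |u₂|²`.
For `u = s ψ + b J ψ` one computes
`u₁u₂ = s² ψ₁ψ₂ + i s b (|ψ₁|² - |ψ₂|²) + b² conj (ψ₁ψ₂)`,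
so taking imaginary parts expresses `q5 u` through `q5 ψ`, `q6 ψ`, `q7 ψ` with coefficient
`s² - b_R² + b_I²` in front of `q5 ψ`; this equals `1 - 2 b_R²` because `s² = 1 - |b|²`.
-/

theorem q5_eq_neg_two_mul_im (u : ℂ × ℂ) : q5 u = -2 * (u.1 * u.2).im := by
  simp only [q5, pair, s3, s2, conj2, map_neg, map_mul, conj_I, conj_conj, add_re, mul_re,
    mul_im, neg_re, neg_im, I_re, I_im]
  ring

theorem q6_eq_two_mul_re (u : ℂ × ℂ) : q6 u = 2 * (u.1 * u.2).re := by
  simp only [q6, pair, s3, s2, conj2, Prod.smul_mk, smul_eq_mul, map_neg, map_mul, conj_I,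
    conj_conj, add_re, mul_re, mul_im, neg_re, neg_im, I_re, I_im]
  ring

theorem q7_eq_normSq_sub_normSq (u : ℂ × ℂ) : q7 u = normSq u.1 - normSq u.2 := by
  simp only [q7, pair, s3, map_neg, add_re, neg_mul, neg_re, mul_comm ((starRingEnd ℂ) _),
    mul_conj, ofReal_re]
  ring

theorem fst_mul_snd_smul_add_smul_Jmap (s b : ℂ) (ψ : ℂ × ℂ) :
    (s • ψ + b • Jmap ψ).1 * (s • ψ + b • Jmap ψ).2 =
      s ^ 2 * (ψ.1 * ψ.2) + I * s * b * (normSq ψ.1 - normSq ψ.2)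
        + b ^ 2 * (starRingEnd ℂ) (ψ.1 * ψ.2) := by
  simp only [Jmap, s2, conj2, Prod.fst_add, Prod.snd_add, Prod.smul_fst, Prod.smul_snd,
    smul_eq_mul, map_mul, ← mul_conj]
  linear_combination (-b ^ 2 * (starRingEnd ℂ) ψ.2 * (starRingEnd ℂ) ψ.1) * I_sq

theorem q5_smul_add_smul_Jmap (s : ℝ) (b : ℂ) (ψ : ℂ × ℂ) :
    q5 ((s : ℂ) • ψ + b • Jmap ψ) =
      (s ^ 2 - b.re ^ 2 + b.im ^ 2) * q5 ψ - 2 * b.im * b.re * q6 ψ - 2 * s * b.re * q7 ψ := by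
  rw [q5_eq_neg_two_mul_im, fst_mul_snd_smul_add_smul_Jmap, q5_eq_neg_two_mul_im,
    q6_eq_two_mul_re, q7_eq_normSq_sub_normSq]
  simp only [← ofReal_sub, add_im, mul_im, mul_re, ofReal_re, ofReal_im,
    I_re, I_im, conj_re, conj_im, sq]
  ring

/-- Transformation law of q₅ under u = s·ψ + b·σ₂·conj ψ. -/
theorem stmt_9 (b : ℂ) (hb : ‖b‖ ≤ 1) (ψ : ℂ × ℂ) (s : ℝ)
    (hs : s = Real.sqrt (1 - ‖b‖ ^ 2))
    (u : ℂ × ℂ) (hu : u = (s : ℂ) • ψ + b • Jmap ψ) :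
    q5 u = (1 - 2 * b.re ^ 2) * q5 ψ - 2 * b.im * b.re * q6 ψ - 2 * s * b.re * q7 ψ := by
  have hs2 : s ^ 2 = 1 - b.re ^ 2 - b.im ^ 2 := by
    rw [hs, Real.sq_sqrt (by nlinarith [norm_nonneg b]), Complex.sq_norm, normSq_apply]
    ring
  rw [hu, q5_smul_add_smul_Jmap, hs2]
  ring
end
end

section
/- With q₅, q₆, q₇ as defined (q₅(u) = Re((conj(σ₃σ₂·conj u))ᵀu), q₆(u) = Re((conj(iσ₃σ₂·conj u))ᵀu), q₇(u) = Re((conj(σ₃u))ᵀu)), let b ∈ ℂ with |b| ≤ 1, b_R = Re b, b_I = Im b, s = √(1-|b|²), and u = s·ψ + b·σ₂·conj(ψ). Then q₇(u) = 2·s·b_R·q₅(ψ) + 2·s·b_I·q₆(ψ) + (1 - 2|b|²)·q₇(ψ). -/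
open Complex

noncomputable section

/-! Expand the quadratic form `q₇` along `u = s ψ + b J ψ`, where `J = σ₂ ∘ conj`. The diagonal
terms give `(s² - |b|²) q₇ ψ = (1 - 2|b|²) q₇ ψ`, because `q₇ (J ψ) = -q₇ ψ` (`J` swaps the two
components up to phases). The cross term `2 s ⟨σ₃ ψ, b J ψ⟩` splits along `b = b_R + i b_I`
into `q₅` and `q₆`, since `σ₃` is symmetric for the pairing. -/

lemma pair_add_left (v v' w : ℂ × ℂ) : pair (v + v') w = pair v w + pair v' w := by
  simp only [pair, Prod.fst_add, Prod.snd_add, map_add, add_mul, add_re]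
  ring

lemma pair_add_right (v w w' : ℂ × ℂ) : pair v (w + w') = pair v w + pair v w' := by
  simp only [pair, Prod.fst_add, Prod.snd_add, mul_add, add_re]
  ring

lemma pair_ofReal_smul_right (r : ℝ) (v w : ℂ × ℂ) : pair v ((r : ℂ) • w) = r * pair v w := by
  simp only [pair, Prod.smul_fst, Prod.smul_snd, smul_eq_mul, add_re, mul_re, mul_im,
    ofReal_re, ofReal_im, conj_re, conj_im]
  ring

lemma pair_ofReal_smul_left (r : ℝ) (v w : ℂ × ℂ) : pair ((r : ℂ) • v) w = r * pair v w := by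
  simp only [pair, Prod.smul_fst, Prod.smul_snd, smul_eq_mul, map_mul, conj_ofReal, add_re,
    mul_re, mul_im, ofReal_re, ofReal_im]
  ring

lemma pair_smul_smul (c : ℂ) (v w : ℂ × ℂ) : pair (c • v) (c • w) = ‖c‖ ^ 2 * pair v w := by
  simp only [pair, Prod.smul_fst, Prod.smul_snd, smul_eq_mul, map_mul, Complex.sq_norm,
    normSq_apply, add_re, mul_re, mul_im, conj_re, conj_im]
  ring

lemma pair_s3_comm (v w : ℂ × ℂ) : pair (s3 v) w = pair (s3 w) v := by
  simp only [pair, s3, map_neg, add_re, mul_re, neg_re, neg_im, conj_re, conj_im]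
  ring

lemma s3_add (v w : ℂ × ℂ) : s3 (v + w) = s3 v + s3 w := by
  simp only [s3, Prod.fst_add, Prod.snd_add, neg_add, Prod.mk_add_mk]

lemma s3_smul (c : ℂ) (v : ℂ × ℂ) : s3 (c • v) = c • s3 v := by
  simp only [s3, Prod.smul_fst, Prod.smul_snd, smul_eq_mul, mul_neg, Prod.smul_mk]

lemma q7_add (v w : ℂ × ℂ) : q7 (v + w) = q7 v + 2 * pair (s3 v) w + q7 w := by
  simp only [q7, s3_add, pair_add_left, pair_add_right, pair_s3_comm w v]
  ring

lemma q7_smul (c : ℂ) (v : ℂ × ℂ) : q7 (c • v) = ‖c‖ ^ 2 * q7 v := by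
  rw [q7, s3_smul, pair_smul_smul, q7]

lemma q7_Jmap (ψ : ℂ × ℂ) : q7 (Jmap ψ) = -q7 ψ := by
  simp only [q7, pair, Jmap, s2, s3, conj2, map_neg, map_mul, conj_I, conj_conj, add_re, mul_re,
    mul_im, neg_re, neg_im, conj_re, conj_im, I_re, I_im]
  ring

lemma q5_eq_pair (ψ : ℂ × ℂ) : q5 ψ = pair (s3 ψ) (Jmap ψ) :=
  pair_s3_comm _ _

lemma q6_eq_pair (ψ : ℂ × ℂ) : q6 ψ = pair (s3 ψ) (I • Jmap ψ) := by
  rw [q6, ← s3_smul, pair_s3_comm, Jmap]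

lemma pair_s3_smul_Jmap (b : ℂ) (ψ : ℂ × ℂ) :
    pair (s3 ψ) (b • Jmap ψ) = b.re * q5 ψ + b.im * q6 ψ := by
  have hb : b • Jmap ψ = (b.re : ℂ) • Jmap ψ + (b.im : ℂ) • (I • Jmap ψ) := by
    rw [smul_smul, ← add_smul, re_add_im]
  rw [hb, pair_add_right, pair_ofReal_smul_right, pair_ofReal_smul_right, q5_eq_pair, q6_eq_pair]

/-- Transformation law of q₇ under u = s·ψ + b·σ₂·conj ψ. -/
theorem stmt_10 (b : ℂ) (hb : ‖b‖ ≤ 1) (ψ : ℂ × ℂ) (s : ℝ)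
    (hs : s = Real.sqrt (1 - ‖b‖ ^ 2))
    (u : ℂ × ℂ) (hu : u = (s : ℂ) • ψ + b • Jmap ψ) :
    q7 u = 2 * s * b.re * q5 ψ + 2 * s * b.im * q6 ψ + (1 - 2 * ‖b‖ ^ 2) * q7 ψ := by
  have hs2 : s ^ 2 = 1 - ‖b‖ ^ 2 := by
    rw [hs, Real.sq_sqrt (sub_nonneg.2 (pow_le_one₀ (norm_nonneg b) hb))]
  rw [hu, q7_add, q7_smul, q7_smul, q7_Jmap, s3_smul, pair_ofReal_smul_left, pair_s3_smul_Jmap,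
    norm_real, Real.norm_eq_abs, sq_abs, hs2]
  ring
end
end

section
/- Let n ∈ ℕ, let e ∈ ℝⁿ with 0 < eₗ < ω for all l, where ω > 0. For multi-indices μ, ν ∈ ℕⁿ write (μ',ν') < (μ,ν) if (μ',ν') ≠ (μ,ν), μ'ₗ ≤ μₗ and ν'ₗ ≤ νₗ for all l. Suppose (μ,ν) satisfies |e·(μ-ν)| > ω and |e·(μ'-ν')| < ω for every (μ',ν') < (μ,ν). Then μ = 0 or ν = 0. -/
open Finset

/- If neither multi-index vanished, lowering either one to 0 would give a strictly smaller pair,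
so both weights e·μ = |e·(μ - 0)| and e·ν = |e·(0 - ν)| would be below ω; as both weights are
nonnegative, their difference e·(μ - ν) would then also be below ω in absolute value. -/

theorem abs_sum_mul_sub_lt {ι : Type*} [Fintype ι] {e : ι → ℝ} (he : ∀ l, 0 ≤ e l)
    {μ ν : ι → ℕ} {ω : ℝ} (hμ : ∑ l, e l * (μ l : ℝ) < ω) (hν : ∑ l, e l * (ν l : ℝ) < ω) :
    |∑ l, e l * ((μ l : ℝ) - (ν l : ℝ))| < ω := by
  simp only [mul_sub, sum_sub_distrib]
  exact abs_sub_lt_of_nonneg_of_lt (sum_nonneg fun l _ => by have := he l; positivity) hμ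
    (sum_nonneg fun l _ => by have := he l; positivity) hν

theorem stmt_12_general (n : ℕ) (e : Fin n → ℝ) (ω : ℝ)
    (he : ∀ l, 0 < e l ∧ e l < ω) (μ ν : Fin n → ℕ)
    (h1 : |∑ l, e l * ((μ l : ℝ) - (ν l : ℝ))| > ω)
    (h2 : ∀ μ' ν' : Fin n → ℕ,
      (μ', ν') ≠ (μ, ν) → (∀ l, μ' l ≤ μ l) → (∀ l, ν' l ≤ ν l) →
      |∑ l, e l * ((μ' l : ℝ) - (ν' l : ℝ))| < ω) :
    μ = 0 ∨ ν = 0 := by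
  by_contra! ⟨hμ, hν⟩
  have hμω := h2 μ 0 (by simpa using hν.symm) (fun _ => le_rfl) (fun _ => Nat.zero_le _)
  have hνω := h2 0 ν (by simpa using hμ.symm) (fun _ => Nat.zero_le _) (fun _ => le_rfl)
  simp only [Pi.zero_apply, Nat.cast_zero, sub_zero, zero_sub, mul_neg, sum_neg_distrib,
    abs_neg] at hμω hνω
  exact (abs_sum_mul_sub_lt (fun l => (he l).1.le) ((le_abs_self _).trans_lt hμω)
    ((le_abs_self _).trans_lt hνω)).not_gt h1

/-- If 0 < eₗ < ω for all l, and (μ,ν) satisfies |e·(μ-ν)| > ω while every strictly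
smaller pair (μ',ν') (componentwise ≤, not equal) satisfies |e·(μ'-ν')| < ω,
then μ = 0 or ν = 0. -/
theorem stmt_12 (n : ℕ) (e : Fin n → ℝ) (ω : ℝ) (hω : 0 < ω)
    (he : ∀ l, 0 < e l ∧ e l < ω) (μ ν : Fin n → ℕ)
    (h1 : |∑ l, e l * ((μ l : ℝ) - (ν l : ℝ))| > ω)
    (h2 : ∀ μ' ν' : Fin n → ℕ,
      (μ', ν') ≠ (μ, ν) → (∀ l, μ' l ≤ μ l) → (∀ l, ν' l ≤ ν l) →
      |∑ l, e l * ((μ' l : ℝ) - (ν' l : ℝ))| < ω) :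
    μ = 0 ∨ ν = 0 :=
  stmt_12_general n e ω he μ ν h1 h2
end
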